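/- arXiv:2410.06687 — 3 statements merged into one kernel-verified Lean document; each statement's English description precedes it below -/
import Mathlib

section
/- If m is odd, then −2 M^{-1} N + (M^{-1} N)² = 0, where N is the m×m matrix with (0,0)-entry 1 and other entries 0. -/
open Matrix

/-- α_j = 1/(8j²−2). -/
noncomputable def alph (j : ℕ) : ℝ := 1 / (8 * (j : ℝ) ^ 2 - 2)

/-- The m×m tridiagonal matrix M with M₀₀ = 1/2, M_{j-1,j} = −α_j, M_{j,j-1} = α_j. -/
noncomputable def Mmat (m : ℕ) : Matrix (Fin m) (Fin m) ℝ :=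
  Matrix.of fun i j =>
    if (i : ℕ) = 0 ∧ (j : ℕ) = 0 then 1 / 2
    else if (i : ℕ) + 1 = (j : ℕ) then - alph (j : ℕ)
    else if (j : ℕ) + 1 = (i : ℕ) then alph (i : ℕ)
    else 0

/-- The m×m matrix N = e₀ e₀ᵀ. -/
noncomputable def Nmat (m : ℕ) : Matrix (Fin m) (Fin m) ℝ :=
  Matrix.of fun i j => if (i : ℕ) = 0 ∧ (j : ℕ) = 0 then 1 else 0

/-- The vector v: v_j = 2(2j+1) for even j (0 else) when m is odd;
    v_j = −2(2j+1) for odd j (0 else) when m is even. -/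
noncomputable def vVec (m : ℕ) : Fin m → ℝ := fun j =>
  if Odd m then (if Even (j : ℕ) then 2 * (2 * (j : ℝ) + 1) else 0)
  else (if Odd (j : ℕ) then -2 * (2 * (j : ℝ) + 1) else 0)

/-- The standard basis vector e₀. -/
noncomputable def e0vec (m : ℕ) : Fin m → ℝ := fun i => if (i : ℕ) = 0 then 1 else 0


/-!
With `N = e₀e₀ᵀ`, the matrix `P = M⁻¹N` satisfies `P² = (M⁻¹)₀₀ • P`, so it suffices that
`(M⁻¹)₀₀ = 2`. For odd `m`, `vVec m` solves `Mv = e₀`: an even row of `M` meets the support of `v`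
(the even indices) only in the entry `M₀₀ = 1/2`, and in an odd row the two neighbouring terms
cancel. If `M` were singular, `M⁻¹ = 0` by Mathlib's convention and the identity is trivial.
-/

theorem Matrix.mul_single_sq {n R : Type*} [Fintype n] [DecidableEq n] [CommSemiring R]
    (A : Matrix n n R) (k : n) :
    (A * single k k 1) ^ 2 = A k k • (A * single k k 1) := by
  have hS : single k k (A k k) = A k k • single k k (1 : R) := by
    rw [smul_single, smul_eq_mul, mul_one]
  rw [sq, Matrix.mul_assoc, ← Matrix.mul_assoc (single k k 1), single_mul_mul_single, one_mul,
    mul_one, hS, Matrix.mul_smul]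

theorem Matrix.inv_apply_of_mulVec_eq_single {n R : Type*} [Fintype n] [DecidableEq n] [CommRing R]
    {A : Matrix n n R} (hA : IsUnit A.det) {v : n → R} {j : n} (h : A *ᵥ v = Pi.single j 1)
    (i : n) : A⁻¹ i j = v i := by
  have hv : A⁻¹ *ᵥ (A *ᵥ v) = v := by rw [mulVec_mulVec, nonsing_inv_mul _ hA, one_mulVec]
  rw [h, mulVec_single_one] at hv
  exact congrFun hv i

lemma Nmat_eq_single (n : ℕ) : Nmat (n + 1) = single 0 0 1 := by
  ext i j
  simp only [Nmat, single, of_apply, Fin.ext_iff, Fin.val_zero]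
  grind

lemma e0vec_eq_single (n : ℕ) : e0vec (n + 1) = Pi.single 0 1 := by
  ext i
  simp only [e0vec, Pi.single_apply, Fin.ext_iff, Fin.val_zero]

lemma vVec_apply_of_odd {m : ℕ} (hm : Odd m) (j : Fin m) :
    vVec m j = if (j : ℕ) % 2 = 0 then 2 * (2 * (j : ℝ) + 1) else 0 := by
  simp [vVec, hm, Nat.even_iff]

lemma Mmat_apply_eq_zero {m : ℕ} {i j : Fin m} (h0 : ¬((i : ℕ) = 0 ∧ (j : ℕ) = 0))
    (h1 : (i : ℕ) + 1 ≠ j) (h2 : (j : ℕ) + 1 ≠ i) : Mmat m i j = 0 := by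
  simp [Mmat, h0, h1, h2]

/-- Since `8j² - 2 = 2(2j - 1)(2j + 1)`, both sides equal `1 / (2i + 1)`. -/
lemma alph_mul_eq_alph_succ_mul {i : ℕ} (hi : 1 ≤ i) :
    alph i * (2 * (2 * ((i : ℝ) - 1) + 1)) = alph (i + 1) * (2 * (2 * ((i : ℝ) + 1) + 1)) := by
  have hi' : (1 : ℝ) ≤ i := by exact_mod_cast hi
  have h1 : 8 * (i : ℝ) ^ 2 - 2 ≠ 0 := by nlinarith
  have h2 : 8 * ((i : ℝ) + 1) ^ 2 - 2 ≠ 0 := by nlinarith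
  simp only [alph]
  push_cast
  field_simp
  ring

lemma Mmat_mulVec_vVec_apply_of_even {n : ℕ} (hn : Odd (n + 1)) (i : Fin (n + 1))
    (hi : (i : ℕ) % 2 = 0) : (Mmat (n + 1) *ᵥ vVec (n + 1)) i = e0vec (n + 1) i := by
  rw [mulVec, dotProduct, Finset.sum_eq_single 0]
  · rw [vVec_apply_of_odd hn]
    by_cases hi0 : (i : ℕ) = 0
    · obtain rfl : i = 0 := Fin.ext hi0
      norm_num [Mmat, e0vec]
    · rw [Mmat_apply_eq_zero (by simp [hi0]) (by simp) (by simp; omega)]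
      simp [e0vec, hi0]
  · intro j _ hj
    have hj0 : (j : ℕ) ≠ 0 := Fin.val_ne_zero_iff.mpr hj
    rw [vVec_apply_of_odd hn]
    split_ifs with hj2
    · rw [Mmat_apply_eq_zero (by omega) (by omega) (by omega), zero_mul]
    · rw [mul_zero]
  · simp

lemma Mmat_mulVec_vVec_apply_of_odd {m : ℕ} (hm : Odd m) (i : Fin m) (hi : (i : ℕ) % 2 = 1) :
    (Mmat m *ᵥ vVec m) i = 0 := by
  have hlt : (i : ℕ) + 1 < m := by obtain ⟨k, rfl⟩ := hm; omega
  let a : Fin m := ⟨i - 1, by omega⟩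
  let b : Fin m := ⟨i + 1, hlt⟩
  have hab : a ≠ b := Fin.ne_of_val_ne (show (i : ℕ) - 1 ≠ i + 1 by omega)
  rw [mulVec, dotProduct, Fintype.sum_eq_add a b hab]
  · have hMa : Mmat m i a = alph i := by
      simp only [Mmat, of_apply, a]
      rw [if_neg (by omega), if_neg (by omega), if_pos (by omega)]
    have hMb : Mmat m i b = -alph (i + 1) := by
      simp [Mmat, b]
    rw [hMa, hMb, vVec_apply_of_odd hm, vVec_apply_of_odd hm, if_pos (by simp [a]; omega),
      if_pos (by simp [b]; omega)]
    simp only [a, b, Nat.cast_sub (by omega : 1 ≤ (i : ℕ)), Nat.cast_add, Nat.cast_one]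
    rw [alph_mul_eq_alph_succ_mul (by omega)]
    ring
  · rintro j ⟨hja, hjb⟩
    have hja' : (j : ℕ) + 1 ≠ i := fun h => hja (Fin.ext (by simp [a]; omega))
    have hjb' : (i : ℕ) + 1 ≠ j := fun h => hjb (Fin.ext (by simp [b]; omega))
    rw [vVec_apply_of_odd hm]
    split_ifs with hj2
    · rw [Mmat_apply_eq_zero (by omega) hjb' hja', zero_mul]
    · rw [mul_zero]

lemma Mmat_mulVec_vVec {n : ℕ} (hn : Odd (n + 1)) :
    Mmat (n + 1) *ᵥ vVec (n + 1) = e0vec (n + 1) := by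
  funext i
  rcases Nat.mod_two_eq_zero_or_one i with hi | hi
  · exact Mmat_mulVec_vVec_apply_of_even hn i hi
  · rw [Mmat_mulVec_vVec_apply_of_odd hn i hi, e0vec, if_neg (by omega)]

theorem G_eq_zero_of_odd_general (m : ℕ) (hodd : Odd m) :
    (-2 : ℝ) • ((Mmat m)⁻¹ * Nmat m) + ((Mmat m)⁻¹ * Nmat m) ^ 2 = 0 := by
  obtain ⟨n, rfl⟩ := Nat.exists_eq_add_one.mpr hodd.pos
  rw [Nmat_eq_single, Matrix.mul_single_sq, ← add_smul]
  by_cases hM : IsUnit (Mmat (n + 1)).det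
  · rw [Matrix.inv_apply_of_mulVec_eq_single hM (e0vec_eq_single n ▸ Mmat_mulVec_vVec hodd)]
    norm_num [vVec, hodd]
  · simp [nonsing_inv_apply_not_isUnit _ hM]

/-- if m is odd then −2M⁻¹N + (M⁻¹N)² = 0. -/
theorem G_eq_zero_of_odd (m : ℕ) (hm : 1 ≤ m) (hodd : Odd m) :
    (-2 : ℝ) • ((Mmat m)⁻¹ * Nmat m) + ((Mmat m)⁻¹ * Nmat m) ^ 2 = 0 :=
  G_eq_zero_of_odd_general m hodd
end

section
/- If m is even, then the first row of M^{-1} is the vector ṽ = 2(0,3,0,7,…,0,2m−1), i.e., (M^{-1})_{0j} = 2(2j+1) for odd j and 0 for even j; if m is odd, then (M^{-1})_{0j} = 2(2j+1) for even j and 0 for odd j. -/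
open Matrix

/-- extension of a Fin m vector to ℕ by zero -/
noncomputable def extv (m : ℕ) (x : Fin m → ℝ) : ℕ → ℝ :=
  fun k => if h : k < m then x ⟨k, h⟩ else 0

lemma extv_apply (m : ℕ) (x : Fin m → ℝ) (j : Fin m) : extv m x (j : ℕ) = x j := by
  simp [extv, j.isLt]

lemma alph_denom_ne {k : ℕ} (hk : 1 ≤ k) : (8 : ℝ) * (k : ℝ) ^ 2 - 2 ≠ 0 := by
  have h1 : (1 : ℝ) ≤ (k : ℝ) := by exact_mod_cast hk
  nlinarith

lemma alph_ne_zero {k : ℕ} (hk : 1 ≤ k) : alph k ≠ 0 := by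
  unfold alph
  exact one_div_ne_zero (alph_denom_ne hk)


lemma Fdec (i k : ℕ) (e : ℕ → ℝ) :
    (if i = 0 ∧ k = 0 then (1/2 : ℝ) else if i + 1 = k then -alph k
      else if k + 1 = i then alph i else 0) * e k
      = (if k = (if i = 0 then 0 else i - 1) then (if i = 0 then (1/2:ℝ) else alph i) * e k else 0)
        + (if k = i + 1 then -alph (i + 1) * e k else 0) := by
  rcases Nat.eq_zero_or_pos i with hi | hi
  · subst hi
    simp only [reduceIte, true_and]
    rcases Nat.eq_zero_or_pos k with hk | hk
    · subst hk; norm_num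
    · by_cases hk1 : k = 1
      · subst hk1; norm_num
      · rw [if_neg (show ¬ k = 0 by omega),
          if_neg (show ¬ (0:ℕ) + 1 = k by omega),
          if_neg (show ¬ k + 1 = 0 by omega),
          if_neg (show ¬ k = 0 by omega),
          if_neg (show ¬ k = 0 + 1 by omega)]
        ring
  · rw [if_neg (show ¬ (i = 0 ∧ k = 0) by omega), if_neg (show ¬ i = 0 by omega),
      if_neg (show ¬ i = 0 by omega)]
    by_cases hB : i + 1 = k
    · subst hB
      rw [if_pos rfl, if_neg (show ¬ i + 1 = i - 1 by omega), if_pos rfl, zero_add]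
    · rw [if_neg hB, if_neg (show ¬ k = i + 1 by omega), add_zero]
      by_cases hC : k + 1 = i
      · rw [if_pos hC, if_pos (show k = i - 1 by omega)]
      · rw [if_neg hC, if_neg (show ¬ k = i - 1 by omega), zero_mul]

lemma Mmat_mulVec (m : ℕ) (x : Fin m → ℝ) (i : Fin m) :
    (Mmat m *ᵥ x) i =
      (if (i : ℕ) = 0 then (1 / 2) * extv m x 0 else alph i * extv m x ((i : ℕ) - 1))
        - alph ((i : ℕ) + 1) * extv m x ((i : ℕ) + 1) := by
  classical
  set F : ℕ → ℝ := fun k =>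
    (if (i : ℕ) = 0 ∧ k = 0 then 1 / 2
      else if (i : ℕ) + 1 = k then - alph k
      else if k + 1 = (i : ℕ) then alph (i : ℕ)
      else 0) * extv m x k with hF
  have hstep : (Mmat m *ᵥ x) i = ∑ k ∈ Finset.range m, F k := by
    rw [← Fin.sum_univ_eq_sum_range]
    simp only [Matrix.mulVec, dotProduct, Mmat, Matrix.of_apply, hF]
    exact Finset.sum_congr rfl fun j _ => by rw [extv_apply]
  set p : ℕ := if (i : ℕ) = 0 then 0 else (i : ℕ) - 1 with hp
  set c : ℝ := if (i : ℕ) = 0 then 1 / 2 else alph (i : ℕ) with hc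
  have hdec : ∀ k, F k =
      (if k = p then c * extv m x k else 0)
        + (if k = (i : ℕ) + 1 then - alph ((i : ℕ) + 1) * extv m x k else 0) := by
    intro k
    exact Fdec (i : ℕ) k (extv m x)
  rw [hstep]
  have hsum : ∑ k ∈ Finset.range m, F k =
      (∑ k ∈ Finset.range m, if k = p then c * extv m x k else 0)
        + (∑ k ∈ Finset.range m, if k = (i : ℕ) + 1 then - alph ((i : ℕ) + 1) * extv m x k else 0) := by
    rw [← Finset.sum_add_distrib]
    exact Finset.sum_congr rfl fun k _ => hdec k
  rw [hsum, Finset.sum_ite_eq' (Finset.range m) p, Finset.sum_ite_eq' (Finset.range m) ((i : ℕ) + 1)]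
  have hpm : p ∈ Finset.range m := by
    simp only [Finset.mem_range, hp]
    split_ifs <;> omega
  rw [if_pos hpm]
  by_cases h1 : (i : ℕ) + 1 < m
  · rw [if_pos (Finset.mem_range.mpr h1)]
    by_cases hi : (i : ℕ) = 0 <;> simp [hp, hc, hi, sub_eq_add_neg]
  · rw [if_neg (by simpa using h1)]
    have hz : extv m x ((i : ℕ) + 1) = 0 := by simp [extv, h1]
    by_cases hi : (i : ℕ) = 0 <;> simp only [hi] at hz ⊢ <;> simp [hp, hc, hi, hz]

lemma Nmat_mulVec (m : ℕ) (x : Fin m → ℝ) (i : Fin m) :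
    (Nmat m *ᵥ x) i = if (i : ℕ) = 0 then extv m x 0 else 0 := by
  classical
  have hstep : (Nmat m *ᵥ x) i
      = ∑ k ∈ Finset.range m, (if k = 0 then (if (i : ℕ) = 0 then extv m x k else 0) else 0) := by
    rw [← Fin.sum_univ_eq_sum_range]
    simp only [Matrix.mulVec, dotProduct, Nmat, Matrix.of_apply]
    refine Finset.sum_congr rfl fun j _ => ?_
    by_cases h1 : (i : ℕ) = 0 <;> by_cases h2 : (j : ℕ) = 0
    · have hxx : extv m x (j : ℕ) = x j := extv_apply m x j
      rw [h2] at hxx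
      simp [h1, h2, hxx]
    all_goals simp [h1, h2]
  rw [hstep, Finset.sum_ite_eq' (Finset.range m) 0]
  have hm0 : 0 < m := i.pos
  rw [if_pos (Finset.mem_range.mpr hm0)]

lemma M_add_transpose (m : ℕ) : Mmat m + (Mmat m)ᵀ = Nmat m := by
  ext i j
  simp only [Matrix.add_apply, Matrix.transpose_apply, Mmat, Nmat, Matrix.of_apply]
  split_ifs <;> first | (norm_num; done) | ring1 | (exfalso; omega)

lemma Nmat_symm (m : ℕ) : (Nmat m)ᵀ = Nmat m := by
  ext i j
  simp only [Matrix.transpose_apply, Nmat, Matrix.of_apply, and_comm]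

lemma Mmat_ker (m : ℕ) (x : Fin m → ℝ) (hx : Mmat m *ᵥ x = 0) : x = 0 := by
  have hNx : x ⬝ᵥ (Nmat m *ᵥ x) = 0 := by
    rw [← M_add_transpose, Matrix.add_mulVec, dotProduct_add, hx,
      Matrix.mulVec_transpose, dotProduct_zero]
    rw [dotProduct_comm, ← Matrix.dotProduct_mulVec, hx, dotProduct_zero, add_zero]
  have hNx' : x ⬝ᵥ (Nmat m *ᵥ x) = extv m x 0 * extv m x 0 := by
    have hstep : x ⬝ᵥ (Nmat m *ᵥ x)
        = ∑ k ∈ Finset.range m, (if k = 0 then extv m x k * extv m x 0 else 0) := by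
      rw [← Fin.sum_univ_eq_sum_range]
      simp only [dotProduct]
      refine Finset.sum_congr rfl fun i _ => ?_
      rw [Nmat_mulVec]
      by_cases h1 : (i : ℕ) = 0
      · have hxx : extv m x (i : ℕ) = x i := extv_apply m x i
        rw [h1] at hxx
        simp [h1, hxx]
      · simp [h1]
    rw [hstep, Finset.sum_ite_eq' (Finset.range m) 0]
    by_cases hm0 : 0 < m
    · rw [if_pos (Finset.mem_range.mpr hm0)]
    · rw [if_neg (by simpa using hm0)]
      simp [extv, hm0]
  have h0 : extv m x 0 = 0 := by
    have := hNx' ▸ hNx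
    nlinarith [sq_nonneg (extv m x 0)]
  -- all entries are zero, by strong induction
  have hall : ∀ k, extv m x k = 0 := by
    intro k
    induction k using Nat.strong_induction_on with
    | _ k ih =>
      match k, ih with
      | 0, _ => exact h0
      | 1, _ =>
        by_cases h1m : 1 < m
        · have hrow := congrFun hx ⟨0, by omega⟩
          rw [Mmat_mulVec] at hrow
          simp only [Pi.zero_apply, Fin.val_mk, reduceIte, h0, mul_zero, zero_sub,
            neg_eq_zero, zero_add] at hrow
          rcases mul_eq_zero.mp hrow with h | h
          · exact absurd h (alph_ne_zero (by norm_num))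
          · exact h
        · simp [extv, h1m]
      | (k + 2), ih =>
        by_cases hkm : k + 2 < m
        · have hrow := congrFun hx ⟨k + 1, by omega⟩
          rw [Mmat_mulVec] at hrow
          simp only [Pi.zero_apply, Fin.val_mk] at hrow
          rw [if_neg (show ¬ (k + 1 : ℕ) = 0 by omega)] at hrow
          have hk0 : extv m x k = 0 := ih k (by omega)
          simp only [Nat.add_sub_cancel, hk0, mul_zero, zero_sub, neg_eq_zero] at hrow
          rcases mul_eq_zero.mp hrow with h | h
          · exact absurd h (alph_ne_zero (by omega))
          · exact h
        · simp [extv, hkm]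
  funext i
  have := hall (i : ℕ)
  rwa [extv_apply] at this

lemma Mmat_injective (m : ℕ) : Function.Injective (Mmat m).mulVec := by
  intro x y hxy
  have h0 : Mmat m *ᵥ (x - y) = 0 := by rw [Matrix.mulVec_sub, hxy, sub_self]
  exact sub_eq_zero.mp (Mmat_ker m _ h0)

lemma Mmat_isUnit (m : ℕ) : IsUnit (Mmat m) :=
  Matrix.mulVec_injective_iff_isUnit.mp (Mmat_injective m)

/-- the claimed first row of M⁻¹ -/
noncomputable def wfun (m : ℕ) : Fin m → ℝ :=
  fun j => if Odd (m + (j : ℕ)) then 2 * (2 * (j : ℝ) + 1) else 0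

lemma extv_wfun (m k : ℕ) (hk : k < m) :
    extv m (wfun m) k = if Odd (m + k) then 2 * (2 * (k : ℝ) + 1) else 0 := by
  simp [extv, hk, wfun]

lemma wfun_vecMul (m : ℕ) (hm : 1 ≤ m) :
    wfun m ᵥ* Mmat m = fun j : Fin m => if (j : ℕ) = 0 then (1 : ℝ) else 0 := by
  have hM : Mmat m = Nmat m - (Mmat m)ᵀ := by
    rw [← M_add_transpose]; ext i j; simp
  funext j
  rw [hM, Matrix.vecMul_sub, Matrix.vecMul_transpose]
  have hN : wfun m ᵥ* Nmat m = Nmat m *ᵥ wfun m := by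
    rw [← Nmat_symm, Matrix.vecMul_transpose, Nmat_symm]
  rw [hN]
  simp only [Pi.sub_apply]
  rw [Nmat_mulVec, Mmat_mulVec]
  by_cases hj : (j : ℕ) = 0
  · -- column 0
    simp only [hj, if_pos rfl, if_true]
    have h0 : extv m (wfun m) 0 = if Odd m then 2 else 0 := by
      rw [extv_wfun m 0 (by omega)]
      by_cases h : Odd m <;> simp [h]
    rcases Nat.even_or_odd m with hme | hmo
    · -- m even, so m ≥ 2
      have hm2 : 1 < m := by
        rcases hme with ⟨t, ht⟩; omega
      have hodd : ¬ Odd m := Nat.not_odd_iff_even.mpr hme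
      have h1 : extv m (wfun m) 1 = 6 := by
        rw [extv_wfun m 1 hm2, if_pos (by rcases hme with ⟨t, ht⟩; exact ⟨t, by omega⟩)]
        norm_num
      rw [h0, if_neg hodd, h1]
      unfold alph
      norm_num
    · have hm1 : extv m (wfun m) 1 = 0 := by
        by_cases hm2 : 1 < m
        · rw [extv_wfun m 1 hm2, if_neg (by rcases hmo with ⟨t, ht⟩; simp [Nat.odd_iff]; omega)]
        · simp [extv, hm2]
      rw [h0, if_pos hmo, hm1]
      norm_num
  · -- other columns
    simp only [hj, if_neg hj, if_false]
    rw [zero_sub, neg_eq_zero, sub_eq_zero]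
    have hj1 : 1 ≤ (j : ℕ) := by omega
    by_cases hpar : Odd (m + ((j : ℕ) - 1))
    · -- neighbors nonzero
      have hjm : (j : ℕ) - 1 < m := by have := j.isLt; omega
      have hA : extv m (wfun m) ((j : ℕ) - 1) = 2 * (2 * ((j : ℝ) - 1) + 1) := by
        rw [extv_wfun m _ hjm, if_pos hpar]
        have hcast : (((j : ℕ) - 1 : ℕ) : ℝ) = (j : ℝ) - 1 := by
          rw [Nat.cast_sub hj1]; norm_num
        rw [hcast]
      by_cases hjm2 : (j : ℕ) + 1 < m
      · have hB : extv m (wfun m) ((j : ℕ) + 1) = 2 * (2 * ((j : ℝ) + 1) + 1) := by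
          rw [extv_wfun m _ hjm2, if_pos (by rcases hpar with ⟨t, ht⟩; exact ⟨t + 1, by omega⟩)]
          push_cast; ring
        rw [hA, hB]
        unfold alph
        have hd1 : (8 : ℝ) * (j : ℝ) ^ 2 - 2 ≠ 0 := alph_denom_ne hj1
        have hd2 : (8 : ℝ) * ((j : ℕ) + 1 : ℕ) ^ 2 - 2 ≠ 0 := alph_denom_ne (by omega)
        push_cast at hd2 ⊢
        have hjr : (1 : ℝ) ≤ (j : ℝ) := by exact_mod_cast hj1
        field_simp
        ring
      · -- j = m - 1 : impossible by parity
        exfalso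
        have hje : (j : ℕ) + 1 = m := by have := j.isLt; omega
        rw [Nat.odd_iff] at hpar
        omega
    · -- neighbors both zero
      have hA : extv m (wfun m) ((j : ℕ) - 1) = 0 := by
        have hjm : (j : ℕ) - 1 < m := by have := j.isLt; omega
        rw [extv_wfun m _ hjm, if_neg hpar]
      have hB : extv m (wfun m) ((j : ℕ) + 1) = 0 := by
        by_cases hjm2 : (j : ℕ) + 1 < m
        · rw [extv_wfun m _ hjm2, if_neg (by rw [Nat.odd_iff] at hpar ⊢; omega)]
        · simp [extv, hjm2]
      rw [hA, hB]
      ring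

/-- the first row of M⁻¹ is 2(2j+1) at indices j of parity opposite to m, and 0 otherwise. -/
theorem Minv_first_row (m : ℕ) (hm : 1 ≤ m) (j : Fin m) :
    (Mmat m)⁻¹ ⟨0, hm⟩ j
      = if Odd m then (if Even (j : ℕ) then 2 * (2 * (j : ℝ) + 1) else 0)
        else (if Odd (j : ℕ) then 2 * (2 * (j : ℝ) + 1) else 0) := by
  classical
  have hU : IsUnit (Mmat m).det := (Matrix.isUnit_iff_isUnit_det _).mp (Mmat_isUnit m)
  have he : (fun i : Fin m => if (i : ℕ) = 0 then (1 : ℝ) else 0) = Pi.single ⟨0, hm⟩ 1 := by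
    funext i
    rw [Pi.single_apply]
    by_cases h : (i : ℕ) = 0
    · rw [if_pos h, if_pos (Fin.ext h)]
    · rw [if_neg h, if_neg (fun hh => h (Fin.ext_iff.mp hh))]
  have hrow : (Mmat m)⁻¹ ⟨0, hm⟩ = wfun m := by
    calc (Mmat m)⁻¹ ⟨0, hm⟩ = Pi.single ⟨0, hm⟩ (1 : ℝ) ᵥ* (Mmat m)⁻¹ :=
          (Matrix.single_one_vecMul _ _).symm
      _ = (wfun m ᵥ* Mmat m) ᵥ* (Mmat m)⁻¹ := by rw [wfun_vecMul m hm, he]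
      _ = wfun m ᵥ* (Mmat m * (Mmat m)⁻¹) := by rw [Matrix.vecMul_vecMul]
      _ = wfun m := by rw [Matrix.mul_nonsing_inv _ hU, Matrix.vecMul_one]
  rw [hrow]
  unfold wfun
  rcases Nat.mod_two_eq_zero_or_one m with h1 | h1 <;>
    rcases Nat.mod_two_eq_zero_or_one (j : ℕ) with h2 | h2 <;>
      simp [Nat.odd_iff, Nat.even_iff, Nat.add_mod, h1, h2]
end

section
/- With constant kernel k ≡ 1, the exact DG matrix is M: that is, for 0 ≤ i, j ≤ m−1, ∫_0^1 (∫_0^s P_j(τ) dτ) P_i(s) ds equals 1/2 if i = j = 0, −α_j if i = j−1 (j ≥ 1), α_i if j = i−1 (i ≥ 1), and 0 otherwise, where α_j = 1/(8j²−2). -/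
open Polynomial

/-- The shifted Legendre polynomial of degree n on [0,1], via the Rodrigues formula
    P_n(s) = (1/n!) dⁿ/dsⁿ (s² − s)ⁿ. -/
noncomputable def shiftedLegendre (n : ℕ) : Polynomial ℝ :=
  (1 / (n.factorial : ℝ)) • (derivative^[n] ((X ^ 2 - X) ^ n))

/-!
Write `P n = (1/n!) Dⁿ Qₙ` with `Qₙ = (X² - X)ⁿ`, whose derivatives of order `< n` vanish at `0`
and `1`, and `F j s = ∫₀ˢ P j`, so that `M i j = ∫₀¹ F j * P i`. Integration by parts gives
`M i j + M j i = F i 1 * F j 1`, which is `1` for `i = j = 0` and `0` otherwise, so only the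
entries with `i > j` need computing. Moving the derivatives off `Qᵢ` kills `M i j` once
`i ≥ j + 2`, because `F j` has degree `j + 1`, and reduces `M (j+1) j` to the top coefficient
of `P j` times `∫₀¹ Q_{j+1} = (-1)^{j+1} (j+1)!² / (2j+3)!`.
-/

open intervalIntegral Nat

theorem integral_primitive_mul_add_integral_primitive_mul {f g : ℝ → ℝ} (hf : Continuous f)
    (hg : Continuous g) (a b : ℝ) :
    (∫ s in a..b, (∫ τ in a..s, f τ) * g s) + (∫ s in a..b, (∫ τ in a..s, g τ) * f s)
      = (∫ τ in a..b, f τ) * ∫ τ in a..b, g τ := by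
  have hparts := integral_mul_deriv_eq_deriv_mul
    (fun x _ => (hf.integral_hasStrictDerivAt a x).hasDerivAt)
    (fun x _ => (hg.integral_hasStrictDerivAt a x).hasDerivAt)
    (hf.intervalIntegrable a b) (hg.intervalIntegrable a b)
  simp only [integral_same, mul_zero, sub_zero] at hparts
  simp only [hparts, mul_comm (f _), sub_add_cancel]

theorem integral_primitive_mul_derivative {f : ℝ → ℝ} (hf : Continuous f) {q : ℝ[X]}
    (h0 : q.eval 0 = 0) (h1 : q.eval 1 = 0) :
    ∫ s in (0:ℝ)..1, (∫ τ in (0:ℝ)..s, f τ) * (derivative q).eval s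
      = -∫ s in (0:ℝ)..1, f s * q.eval s := by
  rw [integral_mul_deriv_eq_deriv_mul (fun x _ => (hf.integral_hasStrictDerivAt 0 x).hasDerivAt)
    (fun x _ => q.hasDerivAt x) (hf.intervalIntegrable 0 1)
    ((derivative q).continuous.intervalIntegrable 0 1), h0, h1]
  simp

theorem Polynomial.iterate_derivative_natDegree_eq_C {R : Type*} [Semiring R] (p : R[X]) :
    derivative^[p.natDegree] p = C ((p.natDegree ! : R) * p.leadingCoeff) := by
  rw [eq_C_of_natDegree_le_zero
    ((natDegree_iterate_derivative p p.natDegree).trans_eq (Nat.sub_self _)),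
    coeff_iterate_derivative, zero_add, descFactorial_self, nsmul_eq_mul, leadingCoeff]

noncomputable def rodrigues (n : ℕ) : ℝ[X] := (X ^ 2 - X) ^ n

theorem shiftedLegendre_eq (n : ℕ) :
    _root_.shiftedLegendre n = C (n ! : ℝ)⁻¹ * derivative^[n] (rodrigues n) := by
  rw [_root_.shiftedLegendre, one_div, smul_eq_C_mul, rodrigues]

theorem eval_rodrigues (n : ℕ) (x : ℝ) : (rodrigues n).eval x = (x ^ 2 - x) ^ n := by
  simp [rodrigues]

theorem natDegree_rodrigues (n : ℕ) : (rodrigues n).natDegree = 2 * n := by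
  rw [rodrigues, natDegree_pow, mul_comm]
  congr
  compute_degree!

theorem monic_rodrigues (n : ℕ) : (rodrigues n).Monic :=
  (monic_X_pow_sub (by rw [degree_X]; norm_num)).pow n

theorem iterate_derivative_rodrigues_two_mul (n : ℕ) :
    derivative^[2 * n] (rodrigues n) = C ((2 * n) ! : ℝ) := by
  simpa [natDegree_rodrigues, (monic_rodrigues n).leadingCoeff] using
    iterate_derivative_natDegree_eq_C (rodrigues n)

theorem eval_iterate_derivative_rodrigues_of_lt {k n : ℕ} (hk : k < n) {x : ℝ}
    (hx : x ^ 2 - x = 0) : (derivative^[k] (rodrigues n)).eval x = 0 := by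
  obtain ⟨r, hr⟩ := pow_sub_dvd_iterate_derivative_pow (X ^ 2 - X : ℝ[X]) n k
  rw [rodrigues, hr]
  simp [hx, Nat.sub_ne_zero_of_lt hk]

theorem integral_mul_iterate_derivative_rodrigues (p : ℝ[X]) {k n : ℕ} (hk : k ≤ n) :
    ∫ x in (0:ℝ)..1, p.eval x * (derivative^[k] (rodrigues n)).eval x
      = (-1) ^ k * ∫ x in (0:ℝ)..1, (derivative^[k] p).eval x * (rodrigues n).eval x := by
  induction k generalizing p with
  | zero => simp
  | succ k ih =>
    have hparts := integral_mul_deriv_eq_deriv_mul (fun x _ => p.hasDerivAt x)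
      (fun x _ => (derivative^[k] (rodrigues n)).hasDerivAt x)
      ((derivative p).continuous.intervalIntegrable 0 1)
      ((derivative (derivative^[k] (rodrigues n))).continuous.intervalIntegrable 0 1)
    rw [Function.iterate_succ_apply', hparts, ih (derivative p) (by omega),
      eval_iterate_derivative_rodrigues_of_lt (by omega) (by norm_num : (0:ℝ) ^ 2 - 0 = 0),
      eval_iterate_derivative_rodrigues_of_lt (by omega) (by norm_num : (1:ℝ) ^ 2 - 1 = 0),
      ← Function.iterate_succ_apply]
    ring

theorem integral_mul_iterate_derivative_rodrigues_eq_zero {p : ℝ[X]} {k n : ℕ} (hk : k ≤ n)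
    (hp : p.natDegree < k) :
    ∫ x in (0:ℝ)..1, p.eval x * (derivative^[k] (rodrigues n)).eval x = 0 := by
  simp [integral_mul_iterate_derivative_rodrigues p hk, iterate_derivative_eq_zero hp]

theorem integral_rodrigues_succ (n : ℕ) :
    ∫ x in (0:ℝ)..1, (rodrigues (n + 1)).eval x
      = -(n + 1) / (2 * (2 * n + 3)) * ∫ x in (0:ℝ)..1, (rodrigues n).eval x := by
  have hparts := integral_mul_deriv_eq_deriv_mul (a := 0) (b := 1)
    (fun x _ => (rodrigues (n + 1)).hasDerivAt x) (fun x _ => (hasDerivAt_id' x).sub_const (1 / 2))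
    ((derivative _).continuous.intervalIntegrable 0 1) (continuous_const.intervalIntegrable 0 1)
  -- integrate `Qₙ₊₁` by parts against `x - 1/2`; then `(2x - 1)² = 4(x² - x) + 1` closes the recursion
  have hderiv : ∀ x : ℝ, (derivative (rodrigues (n + 1))).eval x * (x - 1 / 2)
      = (n + 1) / 2 * (4 * (rodrigues (n + 1)).eval x + (rodrigues n).eval x) := by
    intro x
    simp only [rodrigues, derivative_pow, eval_mul, eval_pow, eval_sub, eval_X, derivative_sub,
      derivative_X, eval_C, eval_one]
    push_cast
    ring
  have hint (m : ℕ) : IntervalIntegrable (fun x => (rodrigues m).eval x) MeasureTheory.volume 0 1 :=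
    (rodrigues m).continuous.intervalIntegrable 0 1
  have h0 : (rodrigues (n + 1)).eval 0 = 0 := by simp [eval_rodrigues]
  have h1 : (rodrigues (n + 1)).eval 1 = 0 := by simp [eval_rodrigues]
  simp only [mul_one, hderiv, h0, h1, zero_mul, sub_zero, zero_sub] at hparts
  rw [integral_const_mul, integral_add ((hint _).const_mul 4) (hint n), integral_const_mul] at hparts
  field_simp
  linear_combination 2 * hparts

theorem integral_rodrigues (n : ℕ) :
    ∫ x in (0:ℝ)..1, (rodrigues n).eval x = (-1) ^ n * (n ! : ℝ) ^ 2 / (2 * n + 1) ! := by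
  induction n with
  | zero => simp [rodrigues]
  | succ n ih =>
    rw [integral_rodrigues_succ, ih, show 2 * (n + 1) + 1 = 2 * n + 1 + 1 + 1 by ring,
      factorial_succ (2 * n + 1 + 1), factorial_succ (2 * n + 1), factorial_succ n]
    push_cast
    field_simp
    ring

theorem natDegree_shiftedLegendre_le (n : ℕ) : (_root_.shiftedLegendre n).natDegree ≤ n := by
  rw [shiftedLegendre_eq]
  refine (natDegree_C_mul_le _ _).trans ((natDegree_iterate_derivative _ _).trans ?_)
  rw [natDegree_rodrigues]
  omega

theorem iterate_derivative_shiftedLegendre (n : ℕ) :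
    derivative^[n] (_root_.shiftedLegendre n) = C ((2 * n) ! / n ! : ℝ) := by
  rw [shiftedLegendre_eq, iterate_derivative_C_mul, ← Function.iterate_add_apply, ← two_mul,
    iterate_derivative_rodrigues_two_mul, ← C_mul, inv_mul_eq_div]

theorem integral_shiftedLegendre (n : ℕ) :
    ∫ x in (0:ℝ)..1, (_root_.shiftedLegendre n).eval x = if n = 0 then 1 else 0 := by
  rcases n.eq_zero_or_pos with rfl | hn
  · simp [shiftedLegendre_eq, rodrigues]
  · have h := integral_mul_iterate_derivative_rodrigues_eq_zero (p := 1) le_rfl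
      (by simpa using hn)
    simp only [eval_one, one_mul] at h
    simp [shiftedLegendre_eq, hn.ne', integral_const_mul, h]

theorem integral_primitive_mul_shiftedLegendre_succ {f : ℝ → ℝ} (hf : Continuous f) (n : ℕ) :
    ∫ s in (0:ℝ)..1, (∫ τ in (0:ℝ)..s, f τ) * (_root_.shiftedLegendre (n + 1)).eval s
      = -((n + 1) ! : ℝ)⁻¹ * ∫ s in (0:ℝ)..1, f s * (derivative^[n] (rodrigues (n + 1))).eval s := by
  simp only [shiftedLegendre_eq, eval_mul, eval_C, Function.iterate_succ_apply',
    mul_left_comm _ ((n + 1) ! : ℝ)⁻¹, integral_const_mul]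
  rw [integral_primitive_mul_derivative hf
    (eval_iterate_derivative_rodrigues_of_lt n.lt_succ_self (by norm_num))
    (eval_iterate_derivative_rodrigues_of_lt n.lt_succ_self (by norm_num))]
  ring

noncomputable def dgMatrix (i j : ℕ) : ℝ :=
  ∫ s in (0:ℝ)..1, (∫ τ in (0:ℝ)..s, (_root_.shiftedLegendre j).eval τ) *
    (_root_.shiftedLegendre i).eval s

theorem dgMatrix_add_dgMatrix_swap (i j : ℕ) :
    dgMatrix i j + dgMatrix j i = if i = 0 ∧ j = 0 then 1 else 0 := by
  rw [dgMatrix, dgMatrix, integral_primitive_mul_add_integral_primitive_mul (Polynomial.continuous _)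
    (Polynomial.continuous _), integral_shiftedLegendre, integral_shiftedLegendre]
  split_ifs <;> simp_all

theorem dgMatrix_eq_zero_of_add_two_le {i j : ℕ} (h : j + 2 ≤ i) : dgMatrix i j = 0 := by
  obtain ⟨n, rfl⟩ : ∃ n, i = n + 1 := ⟨i - 1, by omega⟩
  rw [dgMatrix, integral_primitive_mul_shiftedLegendre_succ (Polynomial.continuous _),
    integral_mul_iterate_derivative_rodrigues_eq_zero n.le_succ
      ((natDegree_shiftedLegendre_le j).trans_lt (by omega)), mul_zero]

theorem dgMatrix_succ_self (j : ℕ) : dgMatrix (j + 1) j = alph (j + 1) := by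
  rw [dgMatrix, integral_primitive_mul_shiftedLegendre_succ (Polynomial.continuous _),
    integral_mul_iterate_derivative_rodrigues _ (Nat.le_add_right j 1),
    iterate_derivative_shiftedLegendre]
  simp only [eval_C, integral_const_mul, integral_rodrigues]
  have hsign : (-1 : ℝ) ^ j * (-1) ^ (j + 1) = -1 := by
    rw [← pow_add, Odd.neg_one_pow ⟨j, by ring⟩]
  have hfac : ((2 * (j + 1) + 1) ! : ℝ) = (2 * j + 3) * (2 * j + 2) * (2 * j + 1) * (2 * j) ! := by
    rw [show 2 * (j + 1) + 1 = 2 * j + 1 + 1 + 1 by ring, factorial_succ, factorial_succ,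
      factorial_succ]
    push_cast
    ring
  rw [alph, hfac, factorial_succ j]
  push_cast
  field_simp
  rw [hsign, neg_neg, eq_div_iff (by nlinarith [(j.cast_nonneg : (0 : ℝ) ≤ j)])]
  ring

/-- with constant kernel k ≡ 1, the DG matrix entries
    ∫₀¹ (∫₀ˢ P_j) P_i ds form exactly the tridiagonal matrix M. -/
theorem dg_matrix_constant_kernel (i j : ℕ) :
    (∫ s in (0:ℝ)..1, (∫ τ in (0:ℝ)..s, (_root_.shiftedLegendre j).eval τ) * (_root_.shiftedLegendre i).eval s)
      = if i = 0 ∧ j = 0 then 1/2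
        else if i + 1 = j then - alph j
        else if j + 1 = i then alph i
        else 0 := by
  change dgMatrix i j = _
  have hswap := dgMatrix_add_dgMatrix_swap i j
  split_ifs at hswap ⊢ with h00 hij hji
  · obtain ⟨rfl, rfl⟩ := h00
    linarith
  · subst hij
    linarith [dgMatrix_succ_self i]
  · subst hji
    exact dgMatrix_succ_self j
  · rcases lt_trichotomy i j with hlt | rfl | hgt
    · linarith [dgMatrix_eq_zero_of_add_two_le (show i + 2 ≤ j by omega)]
    · linarith
    · exact dgMatrix_eq_zero_of_add_two_le (by omega)
end
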